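/- Let D(0) be the output of a function applied to T i.i.d. randomized-response bits RR_ε(0), and D(1) the output of the same function applied to the randomized responses of a stream with a single 1 placed at a uniformly random position among T slots (other entries 0). Then there is a randomized post-processing function h on {0,...,T} such that D(0) = h(Bin(T, 1/(e^ε+1))) and D(1) = h(Bin(T-1, 1/(e^ε+1)) + Bern(e^ε/(e^ε+1))) in distribution; consequently TV(D(0), D(1)) ≤ TV(Bin(T, 1/(e^ε+1)), Bin(T-1, 1/(e^ε+1)) + Bern(e^ε/(e^ε+1))). -/

import Mathlib

open Real

/-- The `ε`-randomized response mechanism on a bit. -/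
noncomputable def rrPMF (ε : ℝ) (b y : Bool) : ℝ :=
  if y = b then exp ε / (1 + exp ε) else 1 / (1 + exp ε)

/-- PMF of the binomial distribution `Bin(T, p)` at `k`. -/
noncomputable def binomPMF (T : ℕ) (p : ℝ) (k : ℕ) : ℝ :=
  (T.choose k : ℝ) * p ^ k * (1 - p) ^ (T - k)

/-- PMF of the independent sum `Bin(T-1, p) + Bern(q)` at `k`. -/
noncomputable def binBernConvPMF (T : ℕ) (p q : ℝ) (k : ℕ) : ℝ :=
  (1 - q) * binomPMF (T - 1) p k +
    q * (if k = 0 then 0 else binomPMF (T - 1) p (k - 1))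

/-- Total variation distance between two distributions on a finite type. -/
noncomputable def tvFin {O : Type} [Fintype O] (f g : O → ℝ) : ℝ :=
  (1 / 2) * ∑ o, |f o - g o|

/-!
Under randomized response the all-zeros stream produces `b` with probability
`q ^ k * (1 - q) ^ (T - k)`, where `k` is the number of ones in `b` and `q = 1 / (e^ε + 1)`.
Putting the `1` at position `t₀` multiplies this by `e^ε` or `e^(-ε)` according to `b t₀`, so
averaging over `t₀` multiplies it by `(k e^ε + (T - k) e^(-ε)) / T`. Both likelihoods therefore
depend on `b` only through `k`: each output distribution is obtained by drawing `k` and then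
applying `f` to a uniformly random stream with `k` ones. The laws of `k` are `Bin(T, q)` and
`Bin(T - 1, q) + Bern(1 - q)`, and post-processing does not increase total variation.
-/

open Finset
open scoped BigOperators

section CountOnes

variable {α : Type*} [Fintype α]

def countOnes (b : α → Bool) : ℕ := #{a | b a = true}

variable (α) in
def countFiber [DecidableEq α] (m : ℕ) : Finset (α → Bool) := {b | countOnes b = m}

lemma countOnes_le (b : α → Bool) : countOnes b ≤ Fintype.card α :=
  card_le_univ _

lemma card_filter_eq_false (b : α → Bool) :
    #{a | b a = false} = Fintype.card α - countOnes b := by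
  have h := card_filter_add_card_filter_not (s := univ) (fun a => b a = true)
  simp only [Bool.not_eq_true, card_univ] at h
  rw [countOnes]
  omega

@[to_additive]
lemma prod_comp_bool {M : Type*} [CommMonoid M] (g : Bool → M) (b : α → Bool) :
    ∏ a, g (b a) = g true ^ countOnes b * g false ^ (Fintype.card α - countOnes b) := by
  rw [← prod_filter_mul_prod_filter_not univ (fun a => b a = true), ← card_filter_eq_false,
    countOnes, prod_eq_pow_card fun a ha => by rw [(mem_filter.1 ha).2],
    prod_eq_pow_card fun a ha => by rw [Bool.eq_false_iff.2 (mem_filter.1 ha).2]]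
  simp only [Bool.not_eq_true]

variable [DecidableEq α]

@[simp]
lemma mem_countFiber {m : ℕ} {b : α → Bool} : b ∈ countFiber α m ↔ countOnes b = m := by
  simp [countFiber]

lemma card_countFiber (m : ℕ) : #(countFiber α m) = (Fintype.card α).choose m := by
  rw [← card_univ, ← card_powersetCard]
  refine card_nbij' (fun b => ({a | b a = true} : Finset α)) (fun s a => decide (a ∈ s))
    ?_ ?_ ?_ ?_
  · intro b hb
    rw [mem_coe, mem_countFiber] at hb
    simpa [countOnes] using hb
  · intro s hs
    rw [mem_coe, mem_powersetCard] at hs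
    simp [mem_countFiber, countOnes, hs.2]
  · intro b _
    funext a
    simp
  · intro s _
    ext a
    simp

lemma countFiber_nonempty {m : ℕ} (hm : m ≤ Fintype.card α) : (countFiber α m).Nonempty := by
  rw [← card_pos, card_countFiber]
  exact Nat.choose_pos hm

lemma sum_mul_eq_sum_choose_mul_expect {K : Type*} [Semifield K] [CharZero K]
    (W : ℕ → K) (f : (α → Bool) → K) :
    ∑ b, W (countOnes b) * f b =
      ∑ m ∈ range (Fintype.card α + 1),
        (Fintype.card α).choose m * W m * 𝔼 b ∈ countFiber α m, f b := by
  rw [← sum_fiberwise_of_maps_to (g := countOnes) (t := range (Fintype.card α + 1))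
    fun b _ => mem_range.2 (Nat.lt_succ_of_le (countOnes_le b))]
  refine sum_congr rfl fun m _ => ?_
  rw [← card_countFiber, mul_comm _ (W m), mul_assoc, ← nsmul_eq_mul, card_smul_expect, mul_sum]
  exact sum_congr rfl fun b hb => by rw [(mem_filter.1 hb).2]

variable {O : Type*}

-- Clamped at `card α` so that `fiberAverage f m` is a probability distribution for every `m`.
noncomputable def fiberAverage (f : (α → Bool) → O → ℝ) (m : ℕ) (o : O) : ℝ :=
  𝔼 b ∈ countFiber α (min m (Fintype.card α)), f b o

lemma fiberAverage_nonneg {f : (α → Bool) → O → ℝ} (hf : ∀ b o, 0 ≤ f b o) (m : ℕ)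
    (o : O) :
    0 ≤ fiberAverage f m o :=
  expect_nonneg fun b _ => hf b o

lemma sum_fiberAverage [Fintype O] {f : (α → Bool) → O → ℝ} (hf : ∀ b, ∑ o, f b o = 1)
    (m : ℕ) :
    ∑ o, fiberAverage f m o = 1 := by
  have hne := countFiber_nonempty (α := α) (min_le_right m (Fintype.card α))
  simp only [fiberAverage, ← expect_sum_comm, hf, expect_const hne]

lemma sum_mul_eq_sum_mul_fiberAverage (f : (α → Bool) → O → ℝ) {W P : ℕ → ℝ}
    (hWP : ∀ m ≤ Fintype.card α, (Fintype.card α).choose m * W m = P m) (o : O) :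
    ∑ b, W (countOnes b) * f b o =
      ∑ m ∈ range (Fintype.card α + 1), P m * fiberAverage f m o := by
  rw [sum_mul_eq_sum_choose_mul_expect W (f · o)]
  refine sum_congr rfl fun m hm => ?_
  have hm' : m ≤ Fintype.card α := Nat.lt_succ_iff.1 (mem_range.1 hm)
  rw [fiberAverage, min_eq_left hm', ← hWP m hm']

end CountOnes

section RandomizedResponse

variable (ε : ℝ)

lemma rrPMF_false_true : rrPMF ε false true = 1 / (exp ε + 1) := by
  simp [rrPMF, add_comm]

lemma rrPMF_false_false : rrPMF ε false false = 1 - 1 / (exp ε + 1) := by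
  have : exp ε + 1 ≠ 0 := by positivity
  simp only [rrPMF, if_true]
  field_simp
  ring

lemma rrPMF_true (y : Bool) :
    rrPMF ε true y = (if y then exp ε else (exp ε)⁻¹) * rrPMF ε false y := by
  have : 1 + exp ε ≠ 0 := by positivity
  cases y <;> simp [rrPMF] <;> field_simp

variable {α : Type*} [Fintype α]

lemma prod_rrPMF_false (b : α → Bool) :
    ∏ a, rrPMF ε false (b a) =
      (1 / (exp ε + 1)) ^ countOnes b *
        (1 - 1 / (exp ε + 1)) ^ (Fintype.card α - countOnes b) := by
  rw [prod_comp_bool, rrPMF_false_true, rrPMF_false_false]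

lemma sum_prod_rrPMF_single [DecidableEq α] (b : α → Bool) :
    ∑ a₀, ∏ a, rrPMF ε (if a = a₀ then true else false) (b a) =
      (countOnes b * exp ε + (Fintype.card α - countOnes b : ℕ) * (exp ε)⁻¹) *
        ∏ a, rrPMF ε false (b a) := by
  have single : ∀ a₀, ∏ a, rrPMF ε (if a = a₀ then true else false) (b a) =
      (if b a₀ then exp ε else (exp ε)⁻¹) * ∏ a, rrPMF ε false (b a) := by
    intro a₀
    have split : ∀ a, rrPMF ε (if a = a₀ then true else false) (b a) =
        (if a = a₀ then (if b a then exp ε else (exp ε)⁻¹) else 1) *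
          rrPMF ε false (b a) := by
      intro a
      by_cases ha : a = a₀
      · simp [ha, rrPMF_true]
      · simp [ha]
    rw [prod_congr rfl fun a _ => split a, prod_mul_distrib, Fintype.prod_ite_eq']
  simp only [single, ← sum_mul, sum_comp_bool fun y => if y then exp ε else (exp ε)⁻¹,
    nsmul_eq_mul, if_true, Bool.false_eq_true, if_false]

end RandomizedResponse

lemma binBernConvPMF_eq {T m : ℕ} (hT : 1 ≤ T) (hm : m ≤ T) {c : ℝ} (hc : 0 < c) :
    binBernConvPMF T (1 / (c + 1)) (c / (c + 1)) m =
      1 / T * (m * c + (T - m : ℕ) * c⁻¹) * binomPMF T (1 / (c + 1)) m := by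
  obtain ⟨n, rfl⟩ := Nat.exists_eq_add_of_le' hT
  have hc1 : c + 1 ≠ 0 := by positivity
  have bern_zero : (1 - c / (c + 1)) * binomPMF n (1 / (c + 1)) m =
      1 / (n + 1 : ℕ) * ((n + 1 - m : ℕ) * c⁻¹) * binomPMF (n + 1) (1 / (c + 1)) m := by
    rcases hm.lt_or_eq with hlt | rfl
    · have hsub : n + 1 - m = n - m + 1 := by omega
      have key : (n.choose m : ℝ) * (n + 1) = (n + 1).choose m * (n - m + 1 : ℕ) := by
        rw [← hsub]; exact_mod_cast Nat.choose_mul_succ_eq n m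
      simp only [binomPMF, hsub, pow_succ]
      field_simp
      push_cast at key ⊢
      linear_combination c * key
    · simp [binomPMF]
  have bern_one : c / (c + 1) * (if m = 0 then 0 else binomPMF n (1 / (c + 1)) (m - 1)) =
      1 / (n + 1 : ℕ) * (m * c) * binomPMF (n + 1) (1 / (c + 1)) m := by
    rcases m with _ | k
    · simp
    · have key : (n + 1 : ℝ) * n.choose k = (n + 1).choose (k + 1) * (k + 1) := by
        exact_mod_cast Nat.add_one_mul_choose_eq n k
      simp only [binomPMF, Nat.add_sub_add_right, Nat.add_sub_cancel, pow_succ,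
        Nat.succ_ne_zero, if_false]
      field_simp
      push_cast
      linear_combination key
  rw [binBernConvPMF, Nat.add_sub_cancel]
  linear_combination bern_zero + bern_one

lemma tvFin_sum_mul_le {ι O : Type} [Fintype O] (s : Finset ι) (p r : ι → ℝ)
    (h : ι → O → ℝ) (h_nonneg : ∀ i o, 0 ≤ h i o) (h_sum : ∀ i, ∑ o, h i o = 1) :
    tvFin (fun o => ∑ i ∈ s, p i * h i o) (fun o => ∑ i ∈ s, r i * h i o) ≤
      1 / 2 * ∑ i ∈ s, |p i - r i| := by
  have pointwise : ∀ o, |∑ i ∈ s, p i * h i o - ∑ i ∈ s, r i * h i o| ≤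
      ∑ i ∈ s, |p i - r i| * h i o := fun o => calc
    _ = |∑ i ∈ s, (p i - r i) * h i o| := by simp only [← sum_sub_distrib, sub_mul]
    _ ≤ ∑ i ∈ s, |(p i - r i) * h i o| := abs_sum_le_sum_abs _ _
    _ = ∑ i ∈ s, |p i - r i| * h i o := by simp only [abs_mul, abs_of_nonneg (h_nonneg _ _)]
  calc tvFin _ _ ≤ 1 / 2 * ∑ o, ∑ i ∈ s, |p i - r i| * h i o :=
        mul_le_mul_of_nonneg_left (sum_le_sum fun o _ => pointwise o) (by norm_num)
    _ = 1 / 2 * ∑ i ∈ s, |p i - r i| := by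
        simp only [sum_comm (s := univ), ← mul_sum, h_sum, mul_one]

theorem stmt13_general {O : Type} [Fintype O] (T : ℕ) (hT : 1 ≤ T) (ε : ℝ)
    (f : (Fin T → Bool) → O → ℝ)
    (hf0 : ∀ b o, 0 ≤ f b o) (hf1 : ∀ b, ∑ o, f b o = 1) :
    let q : ℝ := 1 / (exp ε + 1)
    let D0 : O → ℝ := fun o =>
      ∑ b : Fin T → Bool, (∏ t : Fin T, rrPMF ε false (b t)) * f b o
    let D1 : O → ℝ := fun o =>
      (1 / (T : ℝ)) * ∑ t0 : Fin T, ∑ b : Fin T → Bool,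
        (∏ t : Fin T, rrPMF ε (if t = t0 then true else false) (b t)) * f b o
    ∃ h : ℕ → O → ℝ,
      (∀ m o, 0 ≤ h m o) ∧ (∀ m, ∑ o, h m o = 1) ∧
        (∀ o, D0 o = ∑ m ∈ Finset.range (T + 1), binomPMF T q m * h m o) ∧
        (∀ o, D1 o = ∑ m ∈ Finset.range (T + 1),
          binBernConvPMF T q (exp ε / (exp ε + 1)) m * h m o) ∧
        tvFin D0 D1 ≤ (1 / 2) * ∑ m ∈ Finset.range (T + 1),
          |binomPMF T q m - binBernConvPMF T q (exp ε / (exp ε + 1)) m| := by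
  intro q D0 D1
  have hD0 : ∀ o, D0 o = ∑ m ∈ range (T + 1),
      binomPMF T q m * fiberAverage f m o := fun o => by
    have key := sum_mul_eq_sum_mul_fiberAverage f
      (W := fun m => q ^ m * (1 - q) ^ (T - m)) (P := binomPMF T q)
      (fun m _ => by rw [Fintype.card_fin, binomPMF]; ring) o
    rw [Fintype.card_fin] at key
    rw [← key]
    simp only [D0, prod_rrPMF_false, Fintype.card_fin]
    rfl
  have hD1 : ∀ o, D1 o = ∑ m ∈ range (T + 1),
      binBernConvPMF T q (exp ε / (exp ε + 1)) m * fiberAverage f m o := fun o => by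
    have key := sum_mul_eq_sum_mul_fiberAverage f
      (W := fun m => 1 / T * (m * exp ε + (T - m : ℕ) * (exp ε)⁻¹) *
        (q ^ m * (1 - q) ^ (T - m)))
      (P := binBernConvPMF T q (exp ε / (exp ε + 1)))
      (fun m hm => by
        rw [Fintype.card_fin] at hm ⊢
        rw [binBernConvPMF_eq hT hm (exp_pos ε), binomPMF]
        ring) o
    rw [Fintype.card_fin] at key
    rw [← key]
    simp only [D1, sum_comm (s := univ) (t := univ), mul_sum, ← sum_mul, sum_prod_rrPMF_single,
      prod_rrPMF_false, Fintype.card_fin]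
    exact sum_congr rfl fun b _ => by ring
  refine ⟨fiberAverage f, fiberAverage_nonneg hf0, sum_fiberAverage hf1, hD0, hD1, ?_⟩
  rw [show D0 = _ from funext hD0, show D1 = _ from funext hD1]
  exact tvFin_sum_mul_le _ _ _ _ (fiberAverage_nonneg hf0) (sum_fiberAverage hf1)

/-- Let `D(0)` be a randomized function `f` applied to the `T` i.i.d. randomized
responses of the all-zeros stream, and `D(1)` the same function applied to the
randomized responses of a stream with a single `1` at a uniformly random position.
Then both are post-processings `h` of the count of ones, distributed as
`Bin(T, 1/(e^ε+1))` resp. `Bin(T-1, 1/(e^ε+1)) + Bern(e^ε/(e^ε+1))`, and hence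
`TV(D(0), D(1))` is at most the TV distance between those two count distributions. -/
theorem stmt13 {O : Type} [Fintype O] (T : ℕ) (hT : 1 ≤ T) (ε : ℝ) (hε : 0 < ε)
    (f : (Fin T → Bool) → O → ℝ)
    (hf0 : ∀ b o, 0 ≤ f b o) (hf1 : ∀ b, ∑ o, f b o = 1) :
    let q : ℝ := 1 / (exp ε + 1)
    let D0 : O → ℝ := fun o =>
      ∑ b : Fin T → Bool, (∏ t : Fin T, rrPMF ε false (b t)) * f b o
    let D1 : O → ℝ := fun o =>
      (1 / (T : ℝ)) * ∑ t0 : Fin T, ∑ b : Fin T → Bool,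
        (∏ t : Fin T, rrPMF ε (if t = t0 then true else false) (b t)) * f b o
    ∃ h : ℕ → O → ℝ,
      (∀ m o, 0 ≤ h m o) ∧ (∀ m, ∑ o, h m o = 1) ∧
        (∀ o, D0 o = ∑ m ∈ Finset.range (T + 1), binomPMF T q m * h m o) ∧
        (∀ o, D1 o = ∑ m ∈ Finset.range (T + 1),
          binBernConvPMF T q (exp ε / (exp ε + 1)) m * h m o) ∧
        tvFin D0 D1 ≤ (1 / 2) * ∑ m ∈ Finset.range (T + 1),
          |binomPMF T q m - binBernConvPMF T q (exp ε / (exp ε + 1)) m| :=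
  stmt13_general T hT ε f hf0 hf1
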